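/- arXiv:1612.00188 — 2 statements merged into one kernel-verified Lean document; each statement's English description precedes it below -/
import Mathlib

section
/- Every n×n orthogonal matrix Q can be written as Q = H_n(u_n)·…·H_2(u_2)·H_1(u_1) for some vectors u_k ∈ R^k (k = 2,…,n, nonzero) and some scalar u_1 ∈ {-1, 1}, where H_1(u) = diag(I_{n-1}, u). -/
/-!
Householder QR, column by column. If the orthogonal matrix `Q` fixes `e_0, …, e_{m-1}`, its
column `x = Q e_m` is a unit vector orthogonal to them, hence supported on the last `n - m`
coordinates; the reflection in `x - e_m` (in `e_{n-1}` if `x = e_m`) is therefore an `H_{n-m}`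
that maps `x` to `e_m` and still fixes `e_0, …, e_{m-1}`. After `n - 1` such reflections what is
left is an orthogonal matrix fixing `e_0, …, e_{n-2}`, i.e. `diag(I_{n-1}, ±1)`.
-/

open Matrix

/-- The Householder reflection `I - 2 u uᵀ / ‖u‖²`; for `u` supported on the last `k`
coordinates this is the block matrix `H_k(u) = diag(I_{n-k}, I_k - 2 ũ ũᵀ/‖ũ‖²)`. -/
noncomputable def householder {n : ℕ} (u : Fin n → ℝ) : Matrix (Fin n) (Fin n) ℝ :=
  1 - (2 / ∑ i, u i ^ 2) • vecMulVec u u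

/-- `H_1(u) = diag(I_{n-1}, u)`. -/
def H1 {n : ℕ} (u : ℝ) : Matrix (Fin n) (Fin n) ℝ :=
  Matrix.diagonal (fun i => if (i : ℕ) = n - 1 then u else 1)

section

variable {n : ℕ}

theorem householder_eq (u : Fin n → ℝ) :
    householder u = 1 - (2 / (u ⬝ᵥ u)) • vecMulVec u u := by
  simp only [householder, dotProduct, sq]

theorem householder_mulVec (u x : Fin n → ℝ) :
    householder u *ᵥ x = x - (2 / (u ⬝ᵥ u) * (u ⬝ᵥ x)) • u := by
  rw [householder_eq, sub_mulVec, one_mulVec, smul_mulVec, vecMulVec_mulVec, op_smul_eq_smul,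
    smul_smul]

theorem householder_mulVec_of_dotProduct_eq_zero {u x : Fin n → ℝ} (h : u ⬝ᵥ x = 0) :
    householder u *ᵥ x = x := by
  simp [householder_mulVec, h]

theorem householder_mulVec_householder_mulVec {u : Fin n → ℝ} (hu : u ≠ 0) (x : Fin n → ℝ) :
    householder u *ᵥ (householder u *ᵥ x) = x := by
  have huu : u ⬝ᵥ u ≠ 0 := dotProduct_self_eq_zero.not.mpr hu
  have hux : u ⬝ᵥ (householder u *ᵥ x) = -(u ⬝ᵥ x) := by
    rw [householder_mulVec, dotProduct_sub, dotProduct_smul, smul_eq_mul]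
    field_simp
    ring
  rw [householder_mulVec _ (householder u *ᵥ x), hux, householder_mulVec]
  module

theorem householder_mul_self {u : Fin n → ℝ} (hu : u ≠ 0) :
    householder u * householder u = 1 :=
  ext_iff_mulVec.mpr fun x => by
    rw [← mulVec_mulVec, householder_mulVec_householder_mulVec hu, one_mulVec]

theorem transpose_householder (u : Fin n → ℝ) : (householder u)ᵀ = householder u := by
  rw [householder_eq, transpose_sub, transpose_one, transpose_smul, transpose_vecMulVec]

theorem householder_mem_orthogonalGroup {u : Fin n → ℝ} (hu : u ≠ 0) :
    householder u ∈ orthogonalGroup (Fin n) ℝ := by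
  rw [mem_orthogonalGroup_iff, transpose_householder, householder_mul_self hu]

theorem householder_sub_mulVec {x y : Fin n → ℝ} (hxy : x ⬝ᵥ x = y ⬝ᵥ y) (hne : x ≠ y) :
    householder (x - y) *ᵥ x = y := by
  have huu : (x - y) ⬝ᵥ (x - y) ≠ 0 := dotProduct_self_eq_zero.not.mpr (sub_ne_zero.mpr hne)
  have h : (x - y) ⬝ᵥ (x - y) = 2 * ((x - y) ⬝ᵥ x) := by
    simp only [sub_dotProduct, dotProduct_sub, dotProduct_comm y x, hxy]
    ring
  have hcoeff : 2 / ((x - y) ⬝ᵥ (x - y)) * ((x - y) ⬝ᵥ x) = 1 := by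
    rw [h] at huu ⊢
    have ha := right_ne_zero_of_mul huu
    field_simp
  rw [householder_mulVec, hcoeff, one_smul, sub_sub_cancel]

theorem exists_householder_mulVec_eq {x y w : Fin n → ℝ} (hxy : x ⬝ᵥ x = y ⬝ᵥ y) (hw : w ≠ 0)
    (hwy : w ⬝ᵥ y = 0) : ∃ u, (u = x - y ∨ u = w) ∧ u ≠ 0 ∧ householder u *ᵥ x = y := by
  by_cases hne : x = y
  · subst hne
    exact ⟨w, .inr rfl, hw, householder_mulVec_of_dotProduct_eq_zero hwy⟩
  · exact ⟨x - y, .inl rfl, sub_ne_zero.mpr hne, householder_sub_mulVec hxy hne⟩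

section Orthogonal

variable {ι R : Type*} [Fintype ι] [DecidableEq ι] [CommRing R] {Q : Matrix ι ι R}

theorem mulVec_dotProduct_mulVec (hQ : Q ∈ orthogonalGroup ι R) (x y : ι → R) :
    (Q *ᵥ x) ⬝ᵥ (Q *ᵥ y) = x ⬝ᵥ y := by
  rw [← vecMul_transpose, ← dotProduct_mulVec, mulVec_mulVec,
    (mem_orthogonalGroup_iff' ι R).mp hQ, one_mulVec]

theorem mulVec_apply_eq_of_mulVec_single_one (hQ : Q ∈ orthogonalGroup ι R) {i : ι}
    (hi : Q *ᵥ Pi.single i 1 = Pi.single i 1) (x : ι → R) : (Q *ᵥ x) i = x i := by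
  rw [← single_one_dotProduct i (Q *ᵥ x), ← hi, mulVec_dotProduct_mulVec hQ, single_one_dotProduct]

end Orthogonal

theorem exists_eq_H1 {Q : Matrix (Fin n) (Fin n) ℝ} (hQ : Q ∈ orthogonalGroup (Fin n) ℝ)
    (hfix : ∀ i : Fin n, (i : ℕ) < n - 1 → Q *ᵥ Pi.single i 1 = Pi.single i 1) :
    ∃ c : ℝ, (c = -1 ∨ c = 1) ∧ Q = H1 c := by
  rcases Nat.eq_zero_or_pos n with rfl | hn
  · exact ⟨1, .inr rfl, Subsingleton.elim _ _⟩
  set l : Fin n := ⟨n - 1, by omega⟩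
  have hlt : ∀ i : Fin n, i ≠ l → (i : ℕ) < n - 1 := fun i hi => by
    have := Fin.val_ne_of_ne hi; simp only [l] at this; omega
  have hcol : Q *ᵥ Pi.single l 1 = Pi.single l (Q l l) := by
    ext i
    by_cases hi : i = l
    · simp [hi]
    · rw [mulVec_apply_eq_of_mulVec_single_one hQ (hfix i (hlt i hi)), Pi.single_eq_of_ne hi,
        Pi.single_eq_of_ne hi]
  have hsq : Q l l * Q l l = 1 := by
    simpa [hcol] using mulVec_dotProduct_mulVec hQ (Pi.single l 1) (Pi.single l 1)
  refine ⟨Q l l, (mul_self_eq_one_iff.mp hsq).symm, ext_of_mulVec_single fun j => ?_⟩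
  rw [H1, diagonal_mulVec_single]
  by_cases hj : j = l
  · simp [hj, hcol, l]
  · rw [hfix j (hlt j hj), if_neg (hlt j hj).ne, mul_one]

theorem exists_householder_mul_mulVec_single_one {Q : Matrix (Fin n) (Fin n) ℝ}
    (hQ : Q ∈ orthogonalGroup (Fin n) ℝ) {m : ℕ} (hm : m + 1 < n)
    (hfix : ∀ i : Fin n, (i : ℕ) < m → Q *ᵥ Pi.single i 1 = Pi.single i 1) :
    ∃ u : Fin n → ℝ, u ≠ 0 ∧ (∀ i : Fin n, (i : ℕ) < m → u i = 0) ∧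
      ∀ i : Fin n, (i : ℕ) ≤ m → (householder u * Q) *ᵥ Pi.single i 1 = Pi.single i 1 := by
  set p : Fin n := ⟨m, by omega⟩
  set l : Fin n := ⟨n - 1, by omega⟩
  have hlp : l ≠ p := Fin.ne_of_val_ne (by simp only [l, p]; omega)
  obtain ⟨u, hu_eq, hu0, hux⟩ :=
    exists_householder_mulVec_eq (x := Q *ᵥ Pi.single p 1) (w := Pi.single l 1)
    (mulVec_dotProduct_mulVec hQ _ _) (Pi.single_ne_zero_iff.mpr one_ne_zero)
    (by rw [single_one_dotProduct, Pi.single_eq_of_ne hlp])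
  have hsupp : ∀ i : Fin n, (i : ℕ) < m → u i = 0 := by
    intro i hi
    have hip : i ≠ p := Fin.ne_of_val_ne hi.ne
    have hil : i ≠ l := Fin.ne_of_val_ne (by simp only [l]; omega)
    rcases hu_eq with rfl | rfl
    · rw [Pi.sub_apply, mulVec_apply_eq_of_mulVec_single_one hQ (hfix i hi), sub_self]
    · exact Pi.single_eq_of_ne hil _
  refine ⟨u, hu0, hsupp, fun i hi => ?_⟩
  rw [← mulVec_mulVec]
  rcases hi.lt_or_eq with hi | hi
  · rw [hfix i hi,
      householder_mulVec_of_dotProduct_eq_zero (by rw [dotProduct_single_one, hsupp i hi])]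
  · rw [show i = p from Fin.ext hi, hux]

noncomputable def householderProd (u : ℕ → Fin n → ℝ) (k : ℕ) : Matrix (Fin n) (Fin n) ℝ :=
  ((List.range (k - 1)).map fun j => householder (u (k - j))).prod

theorem householderProd_add_two (u : ℕ → Fin n → ℝ) (k : ℕ) :
    householderProd u (k + 2) = householder (u (k + 2)) * householderProd u (k + 1) := by
  show ((List.range (k + 1)).map _).prod = _ * ((List.range k).map _).prod
  rw [List.range_succ_eq_map, List.map_cons, List.prod_cons, List.map_map]
  congr 2
  exact List.map_congr_left fun j _ => by simp only [Function.comp_apply]; congr 2; omega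

theorem householderProd_congr {u v : ℕ → Fin n → ℝ} {k : ℕ}
    (h : ∀ m, 2 ≤ m → m ≤ k → u m = v m) : householderProd u k = householderProd v k := by
  refine congrArg List.prod (List.map_congr_left fun j hj => ?_)
  rw [List.mem_range] at hj
  rw [h _ (by omega) (by omega)]

theorem exists_eq_householderProd_mul_H1 :
    ∀ k ≤ n, ∀ Q ∈ orthogonalGroup (Fin n) ℝ,
      (∀ i : Fin n, (i : ℕ) < n - k → Q *ᵥ Pi.single i 1 = Pi.single i 1) →
      ∃ (u : ℕ → Fin n → ℝ) (u₁ : ℝ), (u₁ = -1 ∨ u₁ = 1) ∧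
        (∀ m, 2 ≤ m → m ≤ k → u m ≠ 0 ∧ ∀ i : Fin n, (i : ℕ) < n - m → u m i = 0) ∧
        Q = householderProd u k * H1 u₁
  | 0, _, Q, hQ, hfix | 1, _, Q, hQ, hfix => by
    obtain ⟨c, hc, rfl⟩ := exists_eq_H1 hQ fun i hi => hfix i (by omega)
    exact ⟨0, c, hc, fun m hm hmk => absurd hmk (by omega), by simp [householderProd]⟩
  | k + 2, hk, Q, hQ, hfix => by
    obtain ⟨v, hv0, hv, hfix'⟩ :=
      exists_householder_mul_mulVec_single_one hQ (m := n - (k + 2)) (by omega) hfix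
    obtain ⟨u, u₁, hu₁, hu, hQ'⟩ := exists_eq_householderProd_mul_H1 (k + 1) (by omega) _
      (mul_mem (householder_mem_orthogonalGroup hv0) hQ) fun i hi => hfix' i (by omega)
    refine ⟨Function.update u (k + 2) v, u₁, hu₁, fun m hm hmk => ?_, ?_⟩
    · rcases hmk.lt_or_eq with hmk | rfl
      · simpa [Function.update_of_ne hmk.ne] using hu m hm (by omega)
      · simpa using ⟨hv0, hv⟩
    · rw [householderProd_add_two, Function.update_self,
        householderProd_congr fun m _ hm => Function.update_of_ne (by omega) v u, mul_assoc, ← hQ',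
        ← mul_assoc, householder_mul_self hv0, one_mul]

end

/-- every orthogonal `Q ∈ O(n)` can be written as
`Q = H_n(u_n) ⋯ H_2(u_2) H_1(u_1)` with nonzero `u_k ∈ ℝᵏ` and `u_1 ∈ {-1, 1}`. -/
theorem orthogonal_eq_householder_product {n : ℕ} (Q : Matrix (Fin n) (Fin n) ℝ)
    (hQ : Q * Q.transpose = 1) :
    ∃ (u : ℕ → (Fin n → ℝ)) (u₁ : ℝ), (u₁ = -1 ∨ u₁ = 1) ∧
      (∀ k, 2 ≤ k → k ≤ n →
        (u k ≠ 0 ∧ ∀ i : Fin n, (i : ℕ) < n - k → u k i = 0)) ∧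
      Q = (((List.range (n - 1)).map (fun j => householder (u (n - j)))).prod) * H1 u₁ :=
  exists_eq_householderProd_mul_H1 n le_rfl Q ((mem_orthogonalGroup_iff _ _).mpr hQ)
    fun _ hi => absurd hi (by omega)
end

section
/- If T + Tᵀ = UᵀU with T invertible, then (I - U T⁻¹ Uᵀ)(I - U T⁻¹ Uᵀ)ᵀ = I, i.e., I - U T⁻¹ Uᵀ is orthogonal. -/
open Matrix

/-- if `T + Tᵀ = UᵀU` with `T` invertible, then `I - U T⁻¹ Uᵀ` is
orthogonal. -/
theorem WY_orthogonal_of_sum {n m : ℕ} (U : Matrix (Fin n) (Fin m) ℝ)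
    (T : Matrix (Fin m) (Fin m) ℝ) (hT : IsUnit T)
    (h : T + T.transpose = U.transpose * U) :
    ((1 : Matrix (Fin n) (Fin n) ℝ) - U * T⁻¹ * U.transpose) *
      ((1 : Matrix (Fin n) (Fin n) ℝ) - U * T⁻¹ * U.transpose).transpose = 1 := by
  have hT' : IsUnit T.transpose := by rw [Matrix.isUnit_iff_isUnit_det] at hT ⊢; simpa using hT
  have h1 : T * T⁻¹ = 1 := mul_nonsing_inv T (isUnit_iff_isUnit_det T |>.mp hT)
  have h2 : T⁻¹ * T = 1 := nonsing_inv_mul T (isUnit_iff_isUnit_det T |>.mp hT)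
  have h3 : T.transpose * (T.transpose)⁻¹ = 1 :=
    mul_nonsing_inv _ (isUnit_iff_isUnit_det _ |>.mp hT')
  have key : T⁻¹ * (U.transpose * U) * (T.transpose)⁻¹ = (T.transpose)⁻¹ + T⁻¹ := by
    rw [← h]
    rw [mul_add, add_mul, h2, one_mul, Matrix.mul_assoc, h3, Matrix.mul_one]
  have hTinv : (T⁻¹).transpose = (T.transpose)⁻¹ := (transpose_nonsing_inv T)
  simp only [transpose_sub, transpose_one, transpose_mul, transpose_transpose, hTinv, ← Matrix.mul_assoc]
  have expand : (U * T⁻¹ * U.transpose) * (U * (T.transpose)⁻¹ * U.transpose)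
      = U * (T.transpose)⁻¹ * U.transpose + U * T⁻¹ * U.transpose := by
    calc (U * T⁻¹ * U.transpose) * (U * (T.transpose)⁻¹ * U.transpose)
        = U * (T⁻¹ * (U.transpose * U) * (T.transpose)⁻¹) * U.transpose := by
          simp only [Matrix.mul_assoc]
      _ = U * ((T.transpose)⁻¹ + T⁻¹) * U.transpose := by rw [key]
      _ = _ := by simp [Matrix.mul_add, Matrix.add_mul, Matrix.mul_assoc]
  have : (1 - U * T⁻¹ * U.transpose) * (1 - U * (T.transpose)⁻¹ * U.transpose)
      = 1 - U * T⁻¹ * U.transpose - U * (T.transpose)⁻¹ * U.transpose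
        + (U * T⁻¹ * U.transpose) * (U * (T.transpose)⁻¹ * U.transpose) := by
    noncomm_ring
  rw [this, expand]
  abel
end
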